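/- arXiv:1511.09276 — 3 statements merged into one kernel-verified Lean document; each statement's English description precedes it below -/
import Mathlib

section
/- Let X ⊆ ℂ be a compact set and let F be an effective collection of Lipschitz paths in X. If f, g, h : ℂ → ℂ are continuous on X and both g and h are F-derivatives of f, then g(x) = h(x) for every x ∈ X. -/
open Set intervalIntegral Filter

noncomputable section

/-- A path datum: a function `ℝ → ℂ` together with its parameter interval endpoints. -/
abbrev PathData := (ℝ → ℂ) × ℝ × ℝ

/-- `p` is a (rectifiable, modelled as Lipschitz) path in `X`. -/
def IsLipPathIn (X : Set ℂ) (p : PathData) : Prop :=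
  p.2.1 < p.2.2 ∧ (∃ K : NNReal, LipschitzOnWith K p.1 (Set.Icc p.2.1 p.2.2)) ∧
    p.1 '' Set.Icc p.2.1 p.2.2 ⊆ X

/-- `g` is an `F`-derivative of `f`. -/
def IsFDeriv (F : Set PathData) (f g : ℂ → ℂ) : Prop :=
  ∀ p ∈ F, (∫ t in p.2.1..p.2.2, g (p.1 t) * deriv p.1 t) = f (p.1 p.2.2) - f (p.1 p.2.1)

/-- `g` is a `γ`-derivative of `f` on `[a,b]`: the fundamental-theorem identity holds
along every closed subinterval of `[a,b]`. -/
def IsPathDeriv (γ : ℝ → ℂ) (a b : ℝ) (f g : ℂ → ℂ) : Prop :=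
  ∀ c d : ℝ, a ≤ c → c ≤ d → d ≤ b →
    (∫ t in c..d, g (γ t) * deriv γ t) = f (γ d) - f (γ c)

/-- `γ` is admissible on `[a,b]`: nonconstant on every nondegenerate closed subinterval. -/
def AdmissiblePath (γ : ℝ → ℂ) (a b : ℝ) : Prop :=
  ∀ c d : ℝ, a ≤ c → c < d → d ≤ b →
    ∃ s ∈ Set.Icc c d, ∃ t ∈ Set.Icc c d, γ s ≠ γ t

/-- `F` is closed under subpaths. -/
def ClosedUnderSubpaths (F : Set PathData) : Prop :=
  ∀ p ∈ F, ∀ c d : ℝ, p.2.1 ≤ c → c < d → d ≤ p.2.2 → ((p.1, c, d) : PathData) ∈ F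

/-- `F` is an effective collection of paths in `X`. -/
def Effective (X : Set ℂ) (F : Set PathData) : Prop :=
  (∀ p ∈ F, IsLipPathIn X p ∧ AdmissiblePath p.1 p.2.1 p.2.2) ∧
  ClosedUnderSubpaths F ∧
  X ⊆ closure (⋃ p ∈ F, p.1 '' Set.Icc p.2.1 p.2.2)

/-- The maximal collection `F^max` generated by `F`. -/
def MaxColl (X : Set ℂ) (F : Set PathData) : Set PathData :=
  {p | IsLipPathIn X p ∧ AdmissiblePath p.1 p.2.1 p.2.2 ∧
    ∀ f g : ℂ → ℂ, ContinuousOn f X → ContinuousOn g X → IsFDeriv F f g →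
      IsPathDeriv p.1 p.2.1 p.2.2 f g}

/-- The uniform norm of `u` over `X`. -/
def supOn (u : ℂ → ℂ) (X : Set ℂ) : ℝ :=
  sSup ((fun x => ‖u x‖) '' X)

end

/-! If `g x ≠ h x` for some `x ∈ X`, density of the paths of `F` and closedness under subpaths
give a path `γ ∈ F` on `[a, b]` along which `g - h` does not vanish. As `g` and `h` are both
`F`-derivatives of `f`, the integral of `(g - h)(γ t) * γ'(t)` over every `[a, y]` is zero, so by
Lebesgue's differentiation theorem `(g - h)(γ t) * γ'(t)`, hence `γ'(t)`, vanishes for almost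
every `t`. A Lipschitz path is absolutely continuous, so `γ` is constant on `[a, b]`, which
contradicts admissibility. -/

open MeasureTheory Topology NNReal

theorem exists_Icc_subset_of_mem_nhdsWithin_Icc {a b t₀ : ℝ} {s : Set ℝ} (hab : a < b)
    (ht₀ : t₀ ∈ Icc a b) (hs : s ∈ 𝓝[Icc a b] t₀) :
    ∃ c d, a ≤ c ∧ c < d ∧ d ≤ b ∧ Icc c d ⊆ s := by
  obtain ⟨η, hη, hball⟩ := Metric.mem_nhdsWithin_iff.1 hs
  refine ⟨max a (t₀ - η / 2), min b (t₀ + η / 2), le_max_left _ _, ?_, min_le_left _ _, ?_⟩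
  · exact max_lt (lt_min hab (by linarith [ht₀.1])) (lt_min (by linarith [ht₀.2]) (by linarith))
  · rintro t ⟨hct, htd⟩
    rw [max_le_iff] at hct
    rw [le_min_iff] at htd
    refine hball ⟨?_, hct.1, htd.1⟩
    rw [Metric.mem_ball, Real.dist_eq, abs_sub_lt_iff]
    constructor <;> linarith

theorem ae_eq_zero_of_forall_intervalIntegral_eq_zero {E : Type*} [NormedAddCommGroup E]
    [NormedSpace ℝ E] [CompleteSpace E] {Φ : ℝ → E} {a b : ℝ}
    (hΦ : IntervalIntegrable Φ volume a b) (h : ∀ x ∈ Ioo a b, ∫ t in a..x, Φ t = 0) :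
    ∀ᵐ t, t ∈ Ioo a b → Φ t = 0 := by
  filter_upwards [hΦ.ae_hasDerivAt_integral] with t hderiv ht
  have hΦt := hderiv (Icc_subset_uIcc (Ioo_subset_Icc_self ht)) a left_mem_uIcc
  have hconst : (fun x => ∫ s in a..x, Φ s) =ᶠ[𝓝 t] fun _ => 0 :=
    eventually_of_mem (isOpen_Ioo.mem_nhds ht) h
  exact (hΦt.congr_of_eventuallyEq hconst.symm).unique (hasDerivAt_const t 0)

section LipschitzPath

variable {E : Type*} [NormedAddCommGroup E] [NormedSpace ℝ E] {γ : ℝ → E} {K : ℝ≥0} {a b : ℝ}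

theorem LipschitzOnWith.intervalIntegrable_deriv [CompleteSpace E]
    (hγ : LipschitzOnWith K γ (uIcc a b)) : IntervalIntegrable (deriv γ) volume a b := by
  refine (intervalIntegrable_const (c := (K : ℝ))).mono_fun' (aestronglyMeasurable_deriv γ _) ?_
  rw [EventuallyLE, uIoc, ← Measure.restrict_congr_set Ioo_ae_eq_Ioc,
    ae_restrict_iff' measurableSet_Ioo]
  exact .of_forall fun t ht => norm_deriv_le_of_lipschitzOn (Icc_mem_nhds ht.1 ht.2) hγ

theorem LipschitzOnWith.eq_left_of_ae_deriv_eq_zero [FiniteDimensional ℝ E]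
    (hγ : LipschitzOnWith K γ (Icc a b)) (h : ∀ᵐ t, t ∈ Ioo a b → deriv γ t = 0) :
    ∀ t ∈ Icc a b, γ t = γ a := by
  intro t ht
  have hab : a ≤ b := ht.1.trans ht.2
  have hinterior : ∀ᵐ s, s ∈ Icc a b → s ∈ Ioo a b :=
    (Ioo_ae_eq_Icc (μ := volume)).mem_iff.mono fun s hs => hs.2
  rw [← uIcc_of_le hab] at hγ ht
  obtain ⟨C, hC⟩ := hγ.absolutelyContinuousOnInterval.const_of_ae_hasDerivAt_zero <| by
    filter_upwards [h, hinterior, hγ.ae_differentiableWithinAt_of_mem] with s h₀ hs hdiff hsab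
    rw [uIcc_of_le hab] at hsab hdiff
    have hs' := hs hsab
    simpa only [h₀ hs'] using ((hdiff hsab).differentiableAt (Icc_mem_nhds hs'.1 hs'.2)).hasDerivAt
  rw [hC t ht, hC a left_mem_uIcc]

end LipschitzPath

theorem LipschitzOnWith.eq_left_of_forall_intervalIntegral_mul_deriv_eq_zero {γ ψ : ℝ → ℂ}
    {K : ℝ≥0} {a b : ℝ} (hab : a ≤ b) (hγ : LipschitzOnWith K γ (Icc a b))
    (hψ : ContinuousOn ψ (Icc a b)) (hψ₀ : ∀ t ∈ Ioo a b, ψ t ≠ 0)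
    (h : ∀ x ∈ Ioo a b, ∫ t in a..x, ψ t * deriv γ t = 0) :
    ∀ t ∈ Icc a b, γ t = γ a := by
  have hint : IntervalIntegrable (fun t => ψ t * deriv γ t) volume a b := by
    rw [← uIcc_of_le hab] at hγ hψ
    exact hγ.intervalIntegrable_deriv.continuousOn_mul hψ
  refine hγ.eq_left_of_ae_deriv_eq_zero ?_
  filter_upwards [ae_eq_zero_of_forall_intervalIntegral_eq_zero hint h] with t ht hmem
  exact (mul_eq_zero.1 (ht hmem)).resolve_left (hψ₀ t hmem)

theorem IsLipPathIn.continuousOn_comp {X : Set ℂ} {p : PathData} (hp : IsLipPathIn X p)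
    {u : ℂ → ℂ} (hu : ContinuousOn u X) :
    ContinuousOn (fun t => u (p.1 t)) (Icc p.2.1 p.2.2) :=
  let ⟨_, ⟨_, hK⟩, himg⟩ := hp
  hu.comp hK.continuousOn (mapsTo_iff_image_subset.2 himg)

theorem IsLipPathIn.intervalIntegrable_comp_mul_deriv {X : Set ℂ} {p : PathData}
    (hp : IsLipPathIn X p) {u : ℂ → ℂ} (hu : ContinuousOn u X) :
    IntervalIntegrable (fun t => u (p.1 t) * deriv p.1 t) volume p.2.1 p.2.2 := by
  have hu_comp := hp.continuousOn_comp hu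
  obtain ⟨K, hK⟩ := hp.2.1
  rw [← uIcc_of_le hp.1.le] at hK hu_comp
  exact hK.intervalIntegrable_deriv.continuousOn_mul hu_comp

theorem Effective.exists_image_subset_of_mem_nhdsWithin {X : Set ℂ} {F : Set PathData}
    (hF : Effective X F) {x : ℂ} (hx : x ∈ X) {U : Set ℂ} (hU : U ∈ 𝓝[X] x) :
    ∃ p ∈ F, p.1 '' Icc p.2.1 p.2.2 ⊆ U := by
  obtain ⟨V, hVo, hxV, hVU⟩ := mem_nhdsWithin.1 hU
  obtain ⟨z, hzV, hz⟩ := mem_closure_iff.1 (hF.2.2 hx) V hVo hxV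
  simp only [mem_iUnion, mem_image, exists_prop] at hz
  obtain ⟨⟨γ, a, b⟩, hp, t₀, ht₀, rfl⟩ := hz
  obtain ⟨hab, ⟨K, hK⟩, himg⟩ := (hF.1 _ hp).1
  obtain ⟨c, d, hac, hcd, hdb, hsub⟩ := exists_Icc_subset_of_mem_nhdsWithin_Icc hab ht₀
    ((hK.continuousOn t₀ ht₀).preimage_mem_nhdsWithin (hVo.mem_nhds hzV))
  refine ⟨(γ, c, d), hF.2.1 _ hp c d hac hcd hdb, ?_⟩
  rintro _ ⟨t, ht, rfl⟩
  exact hVU ⟨hsub ht, himg ⟨t, Icc_subset_Icc hac hdb ht, rfl⟩⟩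

theorem fDeriv_unique_general (X : Set ℂ)
    (F : Set PathData) (hF : Effective X F)
    (f g h : ℂ → ℂ) (hg : ContinuousOn g X)
    (hh : ContinuousOn h X)
    (hgd : IsFDeriv F f g) (hhd : IsFDeriv F f h) :
    ∀ x ∈ X, g x = h x := by
  intro x hx
  by_contra hne
  obtain ⟨⟨γ, a, b⟩, hp, himg⟩ := hF.exists_image_subset_of_mem_nhdsWithin hx
    (((hg.sub hh) x hx).eventually_ne (sub_ne_zero.2 hne))
  obtain ⟨hpath, hadm⟩ := hF.1 _ hp
  obtain ⟨K, hK⟩ := hpath.2.1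
  have hzero : ∀ y ∈ Ioo a b, ∫ t in a..y, (g (γ t) - h (γ t)) * deriv γ t = 0 := by
    intro y hy
    have hsub := hF.2.1 _ hp a y le_rfl hy.1 hy.2.le
    have hsubpath := (hF.1 _ hsub).1
    simp only [sub_mul]
    rw [integral_sub (hsubpath.intervalIntegrable_comp_mul_deriv hg)
      (hsubpath.intervalIntegrable_comp_mul_deriv hh), hgd _ hsub, hhd _ hsub, sub_self]
  have hconst := hK.eq_left_of_forall_intervalIntegral_mul_deriv_eq_zero hpath.1.le
    (hpath.continuousOn_comp (hg.sub hh))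
    (fun t ht => himg ⟨t, Ioo_subset_Icc_self ht, rfl⟩) hzero
  obtain ⟨s, hs, t, ht, hst⟩ := hadm a b le_rfl hpath.1 le_rfl
  exact hst (by rw [hconst s hs, hconst t ht])

/-- Uniqueness of `F`-derivatives for an effective collection `F`
of Lipschitz paths in a compact set `X`. -/
theorem fDeriv_unique (X : Set ℂ) (hX : IsCompact X)
    (F : Set PathData) (hF : Effective X F)
    (f g h : ℂ → ℂ) (hf : ContinuousOn f X) (hg : ContinuousOn g X)
    (hh : ContinuousOn h X)
    (hgd : IsFDeriv F f g) (hhd : IsFDeriv F f h) :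
    ∀ x ∈ X, g x = h x :=
  fDeriv_unique_general X F hF f g h hg hh hgd hhd
end

section
/- Let X ⊆ ℂ be a compact set and let F and G be effective collections of Lipschitz paths in X. Then the following are equivalent: (i) for all continuous functions f, g on X, if g is an F-derivative of f then g is a G-derivative of f; (ii) G^max ⊆ F^max. -/
open Set intervalIntegral Filter

theorem IsPathDeriv.integral_eq {γ : ℝ → ℂ} {a b : ℝ} {f g : ℂ → ℂ}
    (h : IsPathDeriv γ a b f g) (hab : a ≤ b) :
    (∫ t in a..b, g (γ t) * deriv γ t) = f (γ b) - f (γ a) :=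
  h a b le_rfl hab le_rfl

theorem IsFDeriv.isPathDeriv {F : Set PathData} {f g : ℂ → ℂ} (h : IsFDeriv F f g)
    (hF : ClosedUnderSubpaths F) {p : PathData} (hp : p ∈ F) :
    IsPathDeriv p.1 p.2.1 p.2.2 f g := by
  intro c d hac hcd hdb
  rcases hcd.eq_or_lt with rfl | hlt
  · simp
  · exact h (p.1, c, d) (hF p hp c d hac hlt hdb)

theorem subset_maxColl {X : Set ℂ} {F : Set PathData}
    (hpath : ∀ p ∈ F, IsLipPathIn X p ∧ AdmissiblePath p.1 p.2.1 p.2.2)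
    (hF : ClosedUnderSubpaths F) : F ⊆ MaxColl X F := fun p hp =>
  ⟨(hpath p hp).1, (hpath p hp).2, fun _ _ _ _ hd => hd.isPathDeriv hF hp⟩

theorem maxColl_anti {X : Set ℂ} {F G : Set PathData}
    (h : ∀ f g : ℂ → ℂ, ContinuousOn f X → ContinuousOn g X →
      IsFDeriv F f g → IsFDeriv G f g) :
    MaxColl X G ⊆ MaxColl X F := fun _ ⟨hlip, hadm, hderiv⟩ =>
  ⟨hlip, hadm, fun f g hf hg hd => hderiv f g hf hg (h f g hf hg hd)⟩

theorem fDeriv_mono_iff_maxColl_subset_general (X : Set ℂ)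
    (F G : Set PathData) (hG : Effective X G) :
    (∀ f g : ℂ → ℂ, ContinuousOn f X → ContinuousOn g X →
        IsFDeriv F f g → IsFDeriv G f g) ↔
      MaxColl X G ⊆ MaxColl X F := by
  refine ⟨maxColl_anti, fun h f g hf hg hd p hp => ?_⟩
  obtain ⟨hlip, -, hderiv⟩ := h (subset_maxColl hG.1 hG.2.1 hp)
  exact (hderiv f g hf hg hd).integral_eq hlip.1.le

/-- Every `F`-derivative pair is a `G`-derivative pair iff
`G^max ⊆ F^max`. -/
theorem fDeriv_mono_iff_maxColl_subset (X : Set ℂ) (hX : IsCompact X)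
    (F G : Set PathData) (hF : Effective X F) (hG : Effective X G) :
    (∀ f g : ℂ → ℂ, ContinuousOn f X → ContinuousOn g X →
        IsFDeriv F f g → IsFDeriv G f g) ↔
      MaxColl X G ⊆ MaxColl X F :=
  fDeriv_mono_iff_maxColl_subset_general X F G hG
end

section
/- Let γ : ℝ → ℂ be Lipschitz on [a,b] (a < b), and let ρ : ℝ → ℝ be Lipschitz and monotone nondecreasing on [c,d] (c < d) with ρ(c) = a, ρ(d) = b and ρ([c,d]) ⊆ [a,b]. Then γ ∘ ρ is Lipschitz on [c,d], and for every function f : ℂ → ℂ continuous on γ([a,b]) one has ∫ t in c..d, f(γ(ρ t)) * deriv (γ ∘ ρ) t = ∫ s in a..b, f(γ s) * deriv γ s. (This expresses the invariance of the contour integral under reparametrisation, e.g. passing to the path length or normalised path length parametrisation.) -/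
open Set intervalIntegral Filter

/-!
Extending `γ` and `ρ` by constants outside their parameter intervals makes both globally
Lipschitz without changing either integral. For a monotone `ρ` the chain rule
`(γ ∘ ρ)' = ρ' • γ' ∘ ρ` holds almost everywhere, even though `γ` is only differentiable
almost everywhere: by the monotone change of variables formula, `ρ'` vanishes almost everywhere
on the preimage of any null set, and where `ρ' = 0` the Lipschitz bound on `γ` forces
`(γ ∘ ρ)' = 0`. The substitution `s = ρ t` is then the monotone change of variables formula on
the set of differentiability points of `ρ` in `(c, d)`, whose image has full measure in
`[ρ c, ρ d]` because Lipschitz maps send null sets to null sets.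
-/

open MeasureTheory Topology Asymptotics

theorem LipschitzWith.volume_image_eq_zero {K : NNReal} {f : ℝ → ℝ} (hf : LipschitzWith K f)
    {s : Set ℝ} (hs : volume s = 0) : volume (f '' s) = 0 := by
  simpa [hausdorffMeasure_real, hs] using hf.hausdorffMeasure_image_le zero_le_one s

theorem LipschitzWith.image_ae_eq_image_of_subset {K : NNReal} {f : ℝ → ℝ} (hf : LipschitzWith K f)
    {s t : Set ℝ} (hst : s ⊆ t) (h : volume (t \ s) = 0) : f '' s =ᵐ[volume] f '' t := by
  refine ae_eq_set.2 ⟨by rw [sdiff_eq_empty.2 (image_mono hst), measure_empty], ?_⟩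
  refine measure_mono_null ?_ (hf.volume_image_eq_zero h)
  rintro _ ⟨⟨x, hx, rfl⟩, hxs⟩
  exact ⟨x, ⟨hx, fun hs => hxs ⟨x, hs, rfl⟩⟩, rfl⟩

theorem LipschitzWith.hasDerivAt_comp_of_hasDerivAt_zero {E : Type*} [NormedAddCommGroup E]
    [NormedSpace ℝ E] {K : NNReal} {γ : ℝ → E} (hγ : LipschitzWith K γ) {ρ : ℝ → ℝ} {t : ℝ}
    (hρ : HasDerivAt ρ 0 t) : HasDerivAt (γ ∘ ρ) 0 t := by
  rw [hasDerivAt_iff_isLittleO] at hρ ⊢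
  simp only [smul_zero, sub_zero] at hρ ⊢
  refine IsBigO.trans_isLittleO (IsBigO.of_bound K (Eventually.of_forall fun u => ?_)) hρ
  simpa [dist_eq_norm] using hγ.dist_le_mul (ρ u) (ρ t)

theorem Monotone.ae_deriv_eq_zero_of_mem_null {f : ℝ → ℝ} (hf : Monotone f) {N : Set ℝ}
    (hN : volume N = 0) : ∀ᵐ x, f x ∈ N → deriv f x = 0 := by
  set D := {x | DifferentiableAt ℝ f x}
  have hD : MeasurableSet D := measurableSet_of_differentiableAt ℝ f
  set M := toMeasurable volume N
  have hmeas : AEMeasurable (fun x => ENNReal.ofReal (deriv f x) * M.indicator 1 (f x))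
      (volume.restrict D) :=
    (measurable_deriv f).ennreal_ofReal.aemeasurable.mul
      ((measurable_one.indicator (measurableSet_toMeasurable _ _)).comp_aemeasurable
        ((continuousOn_of_forall_continuousAt fun x hx => hx.continuousAt).aemeasurable hD))
  have hzero : ∫⁻ x in D, ENNReal.ofReal (deriv f x) * M.indicator 1 (f x) = 0 := by
    rw [← lintegral_image_eq_lintegral_deriv_mul_of_monotoneOn hD
      (fun x hx => hx.hasDerivAt.hasDerivWithinAt) (hf.monotoneOn D)]
    refine le_antisymm ((setLIntegral_le_lintegral _ _).trans ?_) zero_le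
    rw [lintegral_indicator_one (measurableSet_toMeasurable _ _), measure_toMeasurable, hN]
  filter_upwards [(ae_restrict_iff' hD).1 ((lintegral_eq_zero_iff' hmeas).1 hzero),
    hf.ae_differentiableAt] with x hx hdiff hfx
  have hM : f x ∈ M := subset_toMeasurable _ _ hfx
  simp only [Pi.zero_apply, indicator_of_mem hM, Pi.one_apply, mul_one,
    ENNReal.ofReal_eq_zero] at hx
  exact le_antisymm (hx hdiff) hf.deriv_nonneg

theorem LipschitzWith.ae_deriv_comp_of_monotone {E : Type*} [NormedAddCommGroup E]
    [NormedSpace ℝ E] [FiniteDimensional ℝ E] {K : NNReal} {γ : ℝ → E} (hγ : LipschitzWith K γ)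
    {ρ : ℝ → ℝ} (hρ : Monotone ρ) : ∀ᵐ t, deriv (γ ∘ ρ) t = deriv ρ t • deriv γ (ρ t) := by
  have hγ_diff : volume {x | ¬DifferentiableAt ℝ γ x} = 0 := hγ.ae_differentiableAt_real
  filter_upwards [hρ.ae_differentiableAt, hρ.ae_deriv_eq_zero_of_mem_null hγ_diff] with t hρt hzero
  by_cases hγt : DifferentiableAt ℝ γ (ρ t)
  · exact deriv.scomp t hγt hρt
  · have hρ0 : HasDerivAt ρ 0 t := hzero hγt ▸ hρt.hasDerivAt
    rw [(hγ.hasDerivAt_comp_of_hasDerivAt_zero hρ0).deriv, hzero hγt, zero_smul]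

theorem LipschitzWith.integral_deriv_smul_comp_of_monotone {F : Type*} [NormedAddCommGroup F]
    [NormedSpace ℝ F] {K : NNReal} {ρ : ℝ → ℝ} (hρ : LipschitzWith K ρ) (hmono : Monotone ρ)
    {c d : ℝ} (hcd : c ≤ d) (g : ℝ → F) :
    ∫ t in c..d, deriv ρ t • g (ρ t) = ∫ s in ρ c..ρ d, g s := by
  set s := Ioo c d ∩ {t | DifferentiableAt ℝ ρ t}
  have hs : MeasurableSet s := measurableSet_Ioo.inter (measurableSet_of_differentiableAt ℝ ρ)
  have hs_sub : s ⊆ Icc c d := fun t ht => Ioo_subset_Icc_self ht.1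
  have hs_null : volume (Icc c d \ s) = 0 := by
    have : Icc c d \ s ⊆ {c, d} ∪ {t | ¬DifferentiableAt ℝ ρ t} := by
      rintro t ⟨⟨hct, htd⟩, hts⟩
      simp only [mem_union, mem_insert_iff, mem_singleton_iff, mem_ofPred_eq]
      by_contra! h
      exact hts ⟨⟨hct.lt_of_ne h.1.1.symm, htd.lt_of_ne h.1.2⟩, h.2⟩
    exact measure_mono_null this
      (measure_union_null ((toFinite _).measure_zero _) hρ.ae_differentiableAt_real)
  have hs_ae : s =ᵐ[volume] Icc c d :=
    ae_eq_set.2 ⟨by rw [sdiff_eq_empty.2 hs_sub, measure_empty], hs_null⟩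
  have himage : ρ '' s =ᵐ[volume] Icc (ρ c) (ρ d) := by
    rw [← hρ.continuous.continuousOn.image_Icc_of_monotoneOn hcd (hmono.monotoneOn _)]
    exact hρ.image_ae_eq_image_of_subset hs_sub hs_null
  calc ∫ t in c..d, deriv ρ t • g (ρ t)
      = ∫ t in s, deriv ρ t • g (ρ t) := by
        rw [integral_of_le hcd, ← integral_Icc_eq_integral_Ioc, setIntegral_congr_set hs_ae]
    _ = ∫ s in ρ '' s, g s := (integral_image_eq_integral_deriv_smul_of_monotoneOn hs
          (fun t ht => ht.2.hasDerivAt.hasDerivWithinAt) (hmono.monotoneOn s) g).symm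
    _ = ∫ s in ρ c..ρ d, g s := by
        rw [setIntegral_congr_set himage, integral_Icc_eq_integral_Ioc,
          ← integral_of_le (hmono hcd)]

theorem LipschitzWith.integral_mul_deriv_comp_of_monotone {A : Type*} [NormedRing A]
    [NormedAlgebra ℝ A] [FiniteDimensional ℝ A] {K K' : NNReal} {γ : ℝ → A}
    (hγ : LipschitzWith K γ) {ρ : ℝ → ℝ} (hρ : LipschitzWith K' ρ) (hmono : Monotone ρ)
    {c d : ℝ} (hcd : c ≤ d) (g : ℝ → A) :
    ∫ t in c..d, g (ρ t) * deriv (γ ∘ ρ) t = ∫ s in ρ c..ρ d, g s * deriv γ s := by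
  rw [← hρ.integral_deriv_smul_comp_of_monotone hmono hcd]
  refine integral_congr_ae ?_
  filter_upwards [hγ.ae_deriv_comp_of_monotone hmono] with t ht _
  rw [ht, mul_smul_comm]

theorem intervalIntegral.integral_comp_mul_deriv_congr {A : Type*} [NormedRing A]
    [NormedAlgebra ℝ A] {a b : ℝ} (hab : a ≤ b) {u v : ℝ → A} (h : EqOn u v (Icc a b))
    (f : A → A) : ∫ s in a..b, f (u s) * deriv u s = ∫ s in a..b, f (v s) * deriv v s := by
  rw [integral_of_le hab, integral_of_le hab, integral_Ioc_eq_integral_Ioo,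
    integral_Ioc_eq_integral_Ioo]
  refine setIntegral_congr_fun measurableSet_Ioo fun s hs => ?_
  have huv : u =ᶠ[𝓝 s] v := eventually_of_mem (Icc_mem_nhds hs.1 hs.2) h
  rw [huv.deriv_eq, h (Ioo_subset_Icc_self hs)]

theorem LipschitzOnWith.lipschitzWith_IccExtend {X : Type*} [PseudoEMetricSpace X] {K : NNReal}
    {f : ℝ → X} {a b : ℝ} (hf : LipschitzOnWith K f (Icc a b)) (hab : a ≤ b) :
    LipschitzWith K (IccExtend hab ((Icc a b).domRestrict f)) := by
  have h := (lipschitzOnWith_iff_restrict.1 hf).comp (LipschitzWith.projIcc hab)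
  rwa [mul_one] at h

theorem contourIntegral_reparam_general (γ : ℝ → ℂ) (a b : ℝ) (K : NNReal)
    (hγ : LipschitzOnWith K γ (Set.Icc a b))
    (ρ : ℝ → ℝ) (c d : ℝ) (hcd : c < d) (K' : NNReal)
    (hρ : LipschitzOnWith K' ρ (Set.Icc c d)) (hmono : MonotoneOn ρ (Set.Icc c d))
    (hρc : ρ c = a) (hρd : ρ d = b) (hρim : ρ '' Set.Icc c d ⊆ Set.Icc a b) :
    (∃ K'' : NNReal, LipschitzOnWith K'' (γ ∘ ρ) (Set.Icc c d)) ∧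
    ∀ f : ℂ → ℂ, ContinuousOn f (γ '' Set.Icc a b) →
      (∫ t in c..d, f (γ (ρ t)) * deriv (γ ∘ ρ) t) = ∫ s in a..b, f (γ s) * deriv γ s := by
  have hab : a ≤ b := hρc ▸ hρd ▸ hmono (left_mem_Icc.2 hcd.le) (right_mem_Icc.2 hcd.le) hcd.le
  refine ⟨⟨K * K', hγ.comp hρ (mapsTo_iff_image_subset.2 hρim)⟩, fun f _ => ?_⟩
  set γ' := IccExtend hab ((Icc a b).domRestrict γ)
  set ρ' := IccExtend hcd.le ((Icc c d).domRestrict ρ)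
  have hγγ' : EqOn γ γ' (Icc a b) := fun s hs =>
    (IccExtend_of_mem (h := hab) ((Icc a b).domRestrict γ) hs).symm
  have hρρ' : EqOn ρ ρ' (Icc c d) := fun t ht =>
    (IccExtend_of_mem (h := hcd.le) ((Icc c d).domRestrict ρ) ht).symm
  have hcomp : EqOn (γ ∘ ρ) (γ' ∘ ρ') (Icc c d) := fun t ht => by
    simp only [Function.comp_apply, ← hρρ' ht, hγγ' (hρim (mem_image_of_mem ρ ht))]
  have hmono' : Monotone ρ' := (monotoneOn_iff_monotone.1 hmono).IccExtend hcd.le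
  calc ∫ t in c..d, f (γ (ρ t)) * deriv (γ ∘ ρ) t
      = ∫ t in c..d, f ((γ' ∘ ρ') t) * deriv (γ' ∘ ρ') t :=
        integral_comp_mul_deriv_congr hcd.le hcomp f
    _ = ∫ s in ρ' c..ρ' d, f (γ' s) * deriv γ' s :=
        (hγ.lipschitzWith_IccExtend hab).integral_mul_deriv_comp_of_monotone
          (hρ.lipschitzWith_IccExtend hcd.le) hmono' hcd.le (f ∘ γ')
    _ = ∫ s in a..b, f (γ s) * deriv γ s := by
        rw [← hρρ' (left_mem_Icc.2 hcd.le), ← hρρ' (right_mem_Icc.2 hcd.le), hρc, hρd]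
        exact (integral_comp_mul_deriv_congr hab hγγ' f).symm

/-- Invariance of the contour integral under monotone Lipschitz
reparametrisation. -/
theorem contourIntegral_reparam (γ : ℝ → ℂ) (a b : ℝ) (hab : a < b) (K : NNReal)
    (hγ : LipschitzOnWith K γ (Set.Icc a b))
    (ρ : ℝ → ℝ) (c d : ℝ) (hcd : c < d) (K' : NNReal)
    (hρ : LipschitzOnWith K' ρ (Set.Icc c d)) (hmono : MonotoneOn ρ (Set.Icc c d))
    (hρc : ρ c = a) (hρd : ρ d = b) (hρim : ρ '' Set.Icc c d ⊆ Set.Icc a b) :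
    (∃ K'' : NNReal, LipschitzOnWith K'' (γ ∘ ρ) (Set.Icc c d)) ∧
    ∀ f : ℂ → ℂ, ContinuousOn f (γ '' Set.Icc a b) →
      (∫ t in c..d, f (γ (ρ t)) * deriv (γ ∘ ρ) t) = ∫ s in a..b, f (γ s) * deriv γ s :=
  contourIntegral_reparam_general γ a b K hγ ρ c d hcd K' hρ hmono hρc hρd hρim
end
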